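/- arXiv:1403.1457 — 2 statements merged into one kernel-verified Lean document; each statement's English description precedes it below -/
import Mathlib

section
/- Let n ≥ 4, let (e_1, …, e_n) be a frame of successive minima for a lattice Λ in an n-dimensional real inner product space, let Λ' be the ℤ-span of the e_i, set e = (e_1 + ⋯ + e_n)/2 and assume Λ = Λ' + ℤ·e. Then N(e) ≤ (n(n+1)/8)·N(e_n); moreover N(e) ≤ N(e_4) if n = 4, N(e) ≤ (5/2)·N(e_5) if n = 5, and N(e) ≤ 4·N(e_6) if n = 6. -/
open scoped BigOperators
noncomputable section

variable {E : Type*} [NormedAddCommGroup E] [InnerProductSpace ℝ E]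

/-- `Nm x = ⟪x, x⟫`, the square of the usual norm. -/
def Nm (x : E) : ℝ := inner ℝ x x

/-- Gram determinant of a family of vectors. -/
def gramDet {n : ℕ} (v : Fin n → E) : ℝ :=
  (Matrix.of fun i j : Fin n => (inner ℝ (v i) (v j) : ℝ)).det

/-- `v` is a ℤ-basis of `Λ`: ℝ-linearly independent and ℤ-spanning `Λ`. -/
def IsZBasis {n : ℕ} (Λ : Submodule ℤ E) (v : Fin n → E) : Prop :=
  LinearIndependent ℝ v ∧ Submodule.span ℤ (Set.range v) = Λ

/-- `Λ` is a lattice in the `n`-dimensional space `E`: the ℤ-span of an ℝ-basis of `E`. -/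
def IsLattice (n : ℕ) (Λ : Submodule ℤ E) : Prop :=
  ∃ v : Fin n → E, Submodule.span ℝ (Set.range v) = ⊤ ∧ IsZBasis Λ v

/-- The determinant of a lattice: the (common) Gram determinant of any of its ℤ-bases. -/
def latDet (n : ℕ) (Λ : Submodule ℤ E) : ℝ :=
  sSup { d : ℝ | ∃ v : Fin n → E, IsZBasis Λ v ∧ d = gramDet v }

/-- `Hb`: infimum of `N(e₁)⋯N(eₙ)/det Λ` over ℤ-bases of `Λ`. -/
def Hb (n : ℕ) (Λ : Submodule ℤ E) : ℝ :=
  sInf { q : ℝ | ∃ v : Fin n → E, IsZBasis Λ v ∧ q = (∏ i, Nm (v i)) / latDet n Λ }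

/-- `Mlat`: infimum of `N(e₁)⋯N(eₙ)/det Λ` over linearly independent tuples in `Λ`. -/
def Mlat (n : ℕ) (Λ : Submodule ℤ E) : ℝ :=
  sInf { q : ℝ | ∃ v : Fin n → E, (∀ i, v i ∈ Λ) ∧ LinearIndependent ℝ v ∧
    q = (∏ i, Nm (v i)) / latDet n Λ }

/-- `Qb Λ = Hb Λ / M Λ`. -/
def Qb (n : ℕ) (Λ : Submodule ℤ E) : ℝ := Hb n Λ / Mlat n Λ

/-- `succMin Λ k`: the least `r` such that `Λ` contains `k` linearly independent
vectors of norm `N ≤ r` (the `k`-th successive minimum `λ_k(Λ)`). -/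
def succMin (Λ : Submodule ℤ E) (k : ℕ) : ℝ :=
  sInf { r : ℝ | ∃ w : Fin k → E, (∀ j, w j ∈ Λ) ∧ LinearIndependent ℝ w ∧ ∀ j, Nm (w j) ≤ r }

/-- `(v 0, …, v (n-1))` is a frame of successive minima for `Λ`. -/
def IsSuccMinFrame {n : ℕ} (Λ : Submodule ℤ E) (v : Fin n → E) : Prop :=
  (∀ i, v i ∈ Λ) ∧ LinearIndependent ℝ v ∧ ∀ i : Fin n, Nm (v i) = succMin Λ ((i : ℕ) + 1)

/-- Two lattices are similar if one is the image of the other under a nonzero scalar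
multiple of a linear isometry. -/
def LatSimilar {F : Type*} [NormedAddCommGroup F] [InnerProductSpace ℝ F]
    (L : Submodule ℤ F) (Λ : Submodule ℤ E) : Prop :=
  ∃ (c : ℝ) (f : F ≃ₗᵢ[ℝ] E), c ≠ 0 ∧
    Λ = Submodule.map ((c • (f.toLinearEquiv : F →ₗ[ℝ] E)).restrictScalars ℤ) L

/-- The centred cubic lattice `Cₙ = ℤⁿ + ℤ·(ε₁+⋯+εₙ)/2` in `ℝⁿ`. -/
def centredCubic (n : ℕ) : Submodule ℤ (EuclideanSpace ℝ (Fin n)) :=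
  Submodule.span ℤ (Set.range (fun i : Fin n => EuclideanSpace.single i (1 : ℝ)) ∪
    {(WithLp.equiv 2 (Fin n → ℝ)).symm fun _ => 2⁻¹})

/-- `Λ` is a centred cubic lattice: it is similar to `Cₙ`. -/
def IsCentredCubic (n : ℕ) (Λ : Submodule ℤ E) : Prop :=
  LatSimilar (centredCubic n) Λ

/-- The index `[Λ : Λ']` of a sublattice. -/
def subIndex (Λ' Λ : Submodule ℤ E) : ℕ :=
  (Λ'.toAddSubgroup.addSubgroupOf Λ.toAddSubgroup).index

/-- The minimum of a lattice: `min{N(x) : x ∈ Λ, x ≠ 0}`. -/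
def minNorm (Λ : Submodule ℤ E) : ℝ :=
  sInf { r : ℝ | ∃ x ∈ Λ, x ≠ 0 ∧ r = Nm x }

/-!
Every lattice vector outside the span of `e₁, …, e_{k-1}` has norm at least `N(e_k)`. Hence
`N(e_i) ≤ N(e_j)` for `i ≤ j`, `2⟪e_i, e_j⟫ ≤ N(e_i)` for `i < j` (apply it to `e_j - e_i`), and
`N(e_n) ≤ N(e - ∑_{i ∈ S} e_i)` whenever `n ∉ S`, since the `e_n`-coordinate of that vector is
`1/2`. Expanding `N(e) = ¼ ∑ ⟪e_i, e_j⟫` with the first two facts gives the general bound.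
For `n = 4, 5, 6` there are a family `𝒮` of sets avoiding `n` and a weight `c ∈ {1, 2}` for
which the off-diagonal inner products cancel in `c N(e) + ∑_{S ∈ 𝒮} N(e - ∑_{i ∈ S} e_i)`,
leaving `(c + |𝒮|)/4 · ∑ N(e_i)`; bounding each `N(e_i)` above and each `N(e - ∑_S e_i)` below
by `N(e_n)` gives the sharper constants.
-/

theorem LinearIndependent.sum_smul_notMem_span_image {ι R M : Type*} [Fintype ι] [Semiring R]
    [AddCommMonoid M] [Module R M] {v : ι → M} (hv : LinearIndependent R v) {s : Set ι}
    {c : ι → R} {t : ι} (ht : t ∉ s) (hc : c t ≠ 0) :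
    ∑ i, c i • v i ∉ Submodule.span R (v '' s) := by
  rw [Finsupp.mem_span_image_iff_linearCombination]
  rintro ⟨l, hl, hlc⟩
  have hl' : l = Finsupp.equivFunOnFinite.symm c := hv <| by
    rw [hlc, Finsupp.linearCombination_apply, Finsupp.sum_fintype] <;> simp
  exact hc (by simpa [hl'] using (Finsupp.mem_supported' R l).1 hl t ht)

lemma Nm_nonneg (x : E) : 0 ≤ Nm x := real_inner_self_nonneg

lemma Nm_sub (x y : E) : Nm (x - y) = Nm x - 2 * inner ℝ x y + Nm y := by
  simp only [Nm, real_inner_sub_sub_self]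

lemma Nm_smul (c : ℝ) (x : E) : Nm (c • x) = c ^ 2 * Nm x := by
  simp only [Nm, real_inner_smul_left, real_inner_smul_right]; ring

lemma Nm_sum {ι : Type*} (s : Finset ι) (e : ι → E) :
    Nm (∑ i ∈ s, e i) = ∑ i ∈ s, ∑ j ∈ s, inner ℝ (e i) (e j) := by
  simp only [Nm, sum_inner, inner_sum]
  exact Finset.sum_comm

theorem Nm_halfSum_le_of_inner_le {ι : Type*} [Fintype ι] (e : ι → E) {L : ℝ}
    (hdiag : ∀ i, Nm (e i) ≤ L) (hoff : ∀ i j, i ≠ j → 2 * inner ℝ (e i) (e j) ≤ L) :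
    Nm ((2 : ℝ)⁻¹ • ∑ i, e i) ≤ Fintype.card ι * (Fintype.card ι + 1) / 8 * L := by
  classical
  unfold Nm at hdiag
  have hrow : ∀ i, ∑ j, inner ℝ (e i) (e j) ≤ (Fintype.card ι + 1) / 2 * L := fun i =>
    calc ∑ j, inner ℝ (e i) (e j) ≤ ∑ j, (L / 2 + if i = j then L / 2 else 0) := by
          refine Finset.sum_le_sum fun j _ => ?_
          split_ifs with h
          · subst h; linarith [hdiag i]
          · linarith [hoff i j h]
      _ = (Fintype.card ι + 1) / 2 * L := by
          simp only [Finset.sum_add_distrib, Finset.sum_const, Finset.card_univ, nsmul_eq_mul,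
            Finset.sum_ite_eq, Finset.mem_univ, ↓reduceIte]
          ring
  rw [Nm_smul, Nm_sum]
  calc (2 : ℝ)⁻¹ ^ 2 * ∑ i, ∑ j, inner ℝ (e i) (e j)
      ≤ (2 : ℝ)⁻¹ ^ 2 * ∑ _i : ι, (Fintype.card ι + 1) / 2 * L := by
        gcongr with i; exact hrow i
    _ = Fintype.card ι * (Fintype.card ι + 1) / 8 * L := by
      simp only [Finset.sum_const, Finset.card_univ, nsmul_eq_mul]; ring

section HalfSumIdentities

variable (a b c d f g : E) {v : E}

theorem Nm_halfSum_add_Nm_sub_four (hv : v = (2 : ℝ)⁻¹ • (a + b + c + d)) :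
    Nm v + Nm (v - a - b) + Nm (v - a - c) + Nm (v - b - c) = Nm a + Nm b + Nm c + Nm d := by
  subst hv
  simp only [Nm, inner_add_left, inner_add_right, inner_sub_left, inner_sub_right,
    real_inner_smul_left, real_inner_smul_right]
  grind [real_inner_comm]

theorem Nm_halfSum_add_Nm_sub_five (hv : v = (2 : ℝ)⁻¹ • (a + b + c + d + f)) :
    2 * Nm v + Nm (v - a - b) + Nm (v - a - c) + Nm (v - a - d) + Nm (v - b - c)
      + Nm (v - b - d) + Nm (v - c - d) + Nm (v - a - b - c) + Nm (v - a - b - d)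
      + Nm (v - a - c - d) + Nm (v - b - c - d) =
      3 * (Nm a + Nm b + Nm c + Nm d + Nm f) := by
  subst hv
  simp only [Nm, inner_add_left, inner_add_right, inner_sub_left, inner_sub_right,
    real_inner_smul_left, real_inner_smul_right]
  grind [real_inner_comm]

theorem Nm_halfSum_add_Nm_sub_six (hv : v = (2 : ℝ)⁻¹ • (a + b + c + d + f + g)) :
    2 * Nm v + Nm (v - a - b - c) + Nm (v - a - b - d) + Nm (v - a - b - f)
      + Nm (v - a - c - d) + Nm (v - a - c - f) + Nm (v - a - d - f) + Nm (v - b - c - d)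
      + Nm (v - b - c - f) + Nm (v - b - d - f) + Nm (v - c - d - f) =
      3 * (Nm a + Nm b + Nm c + Nm d + Nm f + Nm g) := by
  subst hv
  simp only [Nm, inner_add_left, inner_add_right, inner_sub_left, inner_sub_right,
    real_inner_smul_left, real_inner_smul_right]
  grind [real_inner_comm]

end HalfSumIdentities

theorem succMin_le_of_linearIndependent (Λ : Submodule ℤ E) {k : ℕ} (w : Fin (k + 1) → E)
    (hwΛ : ∀ j, w j ∈ Λ) (hw : LinearIndependent ℝ w) {r : ℝ} (hr : ∀ j, Nm (w j) ≤ r) :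
    succMin Λ (k + 1) ≤ r := by
  refine csInf_le ⟨0, ?_⟩ ⟨w, hwΛ, hw, hr⟩
  rintro s ⟨u, -, -, hu⟩
  exact (Nm_nonneg (u 0)).trans (hu 0)

namespace IsSuccMinFrame

variable {Λ : Submodule ℤ E} {n : ℕ} {e : Fin n → E}

theorem Nm_le_of_notMem_span (hf : IsSuccMinFrame Λ e) (m : Fin n) {x : E} (hxΛ : x ∈ Λ)
    (hx : x ∉ Submodule.span ℝ (e '' {i | i < m})) : Nm (e m) ≤ Nm x := by
  induction m using WellFoundedLT.induction generalizing x with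
  | _ m ih =>
  obtain ⟨hΛ, hli, hN⟩ := hf
  have hrange : Set.range (e ∘ Fin.castLE m.isLt.le) = e '' {i | i < m} := by
    ext y
    constructor
    · rintro ⟨k, rfl⟩
      exact ⟨Fin.castLE _ k, k.isLt, rfl⟩
    · rintro ⟨i, hi, rfl⟩
      exact ⟨⟨i, hi⟩, rfl⟩
  -- `e 0, …, e (m-1), x` are independent lattice vectors, of norm `≤ N x` by induction.
  rw [hN]
  refine succMin_le_of_linearIndependent Λ (Fin.snoc (e ∘ Fin.castLE m.isLt.le) x)
    (Fin.lastCases (by simpa using hxΛ) fun k => by simpa using hΛ _)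
    (linearIndependent_finSnoc.2 ⟨hli.comp _ (Fin.castLE_injective _), hrange ▸ hx⟩)
    (Fin.lastCases (by simp) fun k => ?_)
  have hk : Fin.castLE m.isLt.le k < m := k.isLt
  simpa using ih _ hk hxΛ fun h => hx <|
    Submodule.span_mono (Set.image_mono fun i (hi : i < _) => hi.trans hk) h

theorem Nm_le_Nm (hf : IsSuccMinFrame Λ e) {i j : Fin n} (hij : i ≤ j) : Nm (e i) ≤ Nm (e j) :=
  hf.Nm_le_of_notMem_span i (hf.1 j) (hf.2.1.notMem_span_image (not_lt.2 hij))

theorem two_inner_le (hf : IsSuccMinFrame Λ e) {i j : Fin n} (hij : i < j) :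
    2 * inner ℝ (e i) (e j) ≤ Nm (e i) := by
  have hspan : e i ∈ Submodule.span ℝ (e '' {k | k < j}) := Submodule.subset_span ⟨i, hij, rfl⟩
  have h := hf.Nm_le_of_notMem_span j (Λ.sub_mem (hf.1 j) (hf.1 i)) fun h =>
    hf.2.1.notMem_span_image (lt_irrefl j) (by simpa using Submodule.add_mem _ h hspan)
  rw [Nm_sub, real_inner_comm] at h
  linarith

theorem two_inner_le_of_ne (hf : IsSuccMinFrame Λ e) {t : Fin n} (ht : ∀ i, i ≤ t) {i j : Fin n}
    (hij : i ≠ j) : 2 * inner ℝ (e i) (e j) ≤ Nm (e t) := by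
  rcases hij.lt_or_gt with h | h
  · exact (hf.two_inner_le h).trans (hf.Nm_le_Nm (ht i))
  · rw [real_inner_comm]
    exact (hf.two_inner_le h).trans (hf.Nm_le_Nm (ht j))

theorem Nm_le_Nm_sub_sum (hf : IsSuccMinFrame Λ e) {v : E} (hv : v = (2 : ℝ)⁻¹ • ∑ i, e i)
    (hvΛ : v ∈ Λ) {S : Finset (Fin n)} {t : Fin n} (ht : t ∉ S) :
    Nm (e t) ≤ Nm (v - ∑ i ∈ S, e i) := by
  classical
  have hcoord : v - ∑ i ∈ S, e i = ∑ i, ((2 : ℝ)⁻¹ - if i ∈ S then 1 else 0) • e i := by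
    simp [hv, sub_smul, Finset.sum_sub_distrib, Finset.smul_sum, ite_smul]
  refine hf.Nm_le_of_notMem_span t (Λ.sub_mem hvΛ (Λ.sum_mem fun i _ => hf.1 i)) ?_
  rw [hcoord]
  exact hf.2.1.sum_smul_notMem_span_image (lt_irrefl t) (by simp [ht])

theorem Nm_halfSum_le (hf : IsSuccMinFrame Λ e) {v : E} (hv : v = (2 : ℝ)⁻¹ • ∑ i, e i)
    {t : Fin n} (ht : ∀ i, i ≤ t) : Nm v ≤ n * (n + 1) / 8 * Nm (e t) := by
  simpa [hv] using Nm_halfSum_le_of_inner_le e (fun i => hf.Nm_le_Nm (ht i))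
    fun _ _ => hf.two_inner_le_of_ne ht

theorem Nm_halfSum_le_four {e : Fin 4 → E} (hf : IsSuccMinFrame Λ e)
    (hv : v = (2 : ℝ)⁻¹ • ∑ i, e i) (hvΛ : v ∈ Λ) : Nm v ≤ Nm (e 3) := by
  have up (i : Fin 4) : Nm (e i) ≤ Nm (e 3) := hf.Nm_le_Nm (Fin.le_last i)
  have low (S : Finset (Fin 4)) (hS : 3 ∉ S) := hf.Nm_le_Nm_sub_sum hv hvΛ hS
  have h01 := low {0, 1} (by decide)
  have h02 := low {0, 2} (by decide)
  have h12 := low {1, 2} (by decide)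
  simp only [Finset.mem_singleton, Finset.sum_insert, Finset.sum_singleton, sub_add_eq_sub_sub,
    Fin.reduceEq, not_false_eq_true] at h01 h02 h12
  have := Nm_halfSum_add_Nm_sub_four (v := v) (e 0) (e 1) (e 2) (e 3)
    (by rwa [Fin.sum_univ_four] at hv)
  linarith [up 0, up 1, up 2]

theorem Nm_halfSum_le_five {e : Fin 5 → E} (hf : IsSuccMinFrame Λ e)
    (hv : v = (2 : ℝ)⁻¹ • ∑ i, e i) (hvΛ : v ∈ Λ) : Nm v ≤ 5 / 2 * Nm (e 4) := by
  have up (i : Fin 5) : Nm (e i) ≤ Nm (e 4) := hf.Nm_le_Nm (Fin.le_last i)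
  have low (S : Finset (Fin 5)) (hS : 4 ∉ S) := hf.Nm_le_Nm_sub_sum hv hvΛ hS
  have h01 := low {0, 1} (by decide)
  have h02 := low {0, 2} (by decide)
  have h03 := low {0, 3} (by decide)
  have h12 := low {1, 2} (by decide)
  have h13 := low {1, 3} (by decide)
  have h23 := low {2, 3} (by decide)
  have h012 := low {0, 1, 2} (by decide)
  have h013 := low {0, 1, 3} (by decide)
  have h023 := low {0, 2, 3} (by decide)
  have h123 := low {1, 2, 3} (by decide)
  simp only [Finset.mem_insert, Finset.mem_singleton, Finset.sum_insert, Finset.sum_singleton,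
    sub_add_eq_sub_sub, Fin.reduceEq, or_self, not_false_eq_true]
    at h01 h02 h03 h12 h13 h23 h012 h013 h023 h123
  have := Nm_halfSum_add_Nm_sub_five (v := v) (e 0) (e 1) (e 2) (e 3) (e 4)
    (by rwa [Fin.sum_univ_five] at hv)
  linarith [up 0, up 1, up 2, up 3]

theorem Nm_halfSum_le_six {e : Fin 6 → E} (hf : IsSuccMinFrame Λ e)
    (hv : v = (2 : ℝ)⁻¹ • ∑ i, e i) (hvΛ : v ∈ Λ) : Nm v ≤ 4 * Nm (e 5) := by
  have up (i : Fin 6) : Nm (e i) ≤ Nm (e 5) := hf.Nm_le_Nm (Fin.le_last i)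
  have low (S : Finset (Fin 6)) (hS : 5 ∉ S) := hf.Nm_le_Nm_sub_sum hv hvΛ hS
  have h012 := low {0, 1, 2} (by decide)
  have h013 := low {0, 1, 3} (by decide)
  have h014 := low {0, 1, 4} (by decide)
  have h023 := low {0, 2, 3} (by decide)
  have h024 := low {0, 2, 4} (by decide)
  have h034 := low {0, 3, 4} (by decide)
  have h123 := low {1, 2, 3} (by decide)
  have h124 := low {1, 2, 4} (by decide)
  have h134 := low {1, 3, 4} (by decide)
  have h234 := low {2, 3, 4} (by decide)
  simp only [Finset.mem_insert, Finset.mem_singleton, Finset.sum_insert, Finset.sum_singleton,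
    sub_add_eq_sub_sub, Fin.reduceEq, or_self, not_false_eq_true]
    at h012 h013 h014 h023 h024 h034 h123 h124 h134 h234
  have := Nm_halfSum_add_Nm_sub_six (v := v) (e 0) (e 1) (e 2) (e 3) (e 4) (e 5)
    (by rwa [Fin.sum_univ_six] at hv)
  linarith [up 0, up 1, up 2, up 3, up 4]

end IsSuccMinFrame

/-- let `n ≥ 4`, let `(e₁,…,eₙ)` be a frame of successive minima for
a lattice `Λ` with `Λ = Λ' + ℤ·e`, `Λ'` the ℤ-span of the `eᵢ` and
`e = (e₁+⋯+eₙ)/2`. Then `N(e) ≤ (n(n+1)/8)·N(eₙ)`, and `N(e) ≤ N(e₄)` if `n = 4`,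
`N(e) ≤ (5/2)·N(e₅)` if `n = 5`, `N(e) ≤ 4·N(e₆)` if `n = 6`. -/
theorem norm_of_half_sum_bounds (n : ℕ) (hn : 4 ≤ n)
    (Λ : Submodule ℤ E)
    (e : Fin n → E) (hframe : IsSuccMinFrame Λ e)
    (v : E) (hv : v = (2 : ℝ)⁻¹ • ∑ i, e i)
    (hgen : Λ = Submodule.span ℤ (Set.range e ∪ {v})) :
    Nm v ≤ (n : ℝ) * ((n : ℝ) + 1) / 8 * Nm (e ⟨n - 1, by omega⟩) ∧
      (∀ _ : n = 4, Nm v ≤ Nm (e ⟨3, by omega⟩)) ∧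
      (∀ h : n = 5, Nm v ≤ 5 / 2 * Nm (e ⟨4, by omega⟩)) ∧
      (∀ h : n = 6, Nm v ≤ 4 * Nm (e ⟨5, by omega⟩)) := by
  have hvΛ : v ∈ Λ := hgen ▸ Submodule.subset_span (Set.mem_union_right _ rfl)
  refine ⟨hframe.Nm_halfSum_le hv fun i => Fin.le_def.2 (by simp only; omega), ?_, ?_, ?_⟩
  · rintro rfl
    exact hframe.Nm_halfSum_le_four hv hvΛ
  · rintro rfl
    exact hframe.Nm_halfSum_le_five hv hvΛ
  · rintro rfl
    exact hframe.Nm_halfSum_le_six hv hvΛ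
end
end

section
/- Let Λ be a lattice in an n-dimensional real inner product space, let (e_1, …, e_n) be a frame of successive minima for Λ, let Λ' be the ℤ-span of the e_i, and suppose Λ = Λ' + ℤ·e with e = (e_1 + ⋯ + e_n)/d, where either d = 3 and 7 ≤ n ≤ 10, or d = 4 and 7 ≤ n ≤ 13. Then Q_b(Λ) < n/4. -/
open scoped BigOperators
noncomputable section

variable {E : Type*} [NormedAddCommGroup E] [InnerProductSpace ℝ E]

lemma Nm_pos {x : E} (h : x ≠ 0) : 0 < Nm x := real_inner_self_pos.mpr h

lemma Nm_add_smul (y x : E) (c : ℝ) :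
    Nm (y + c • x) = Nm y + 2 * c * inner ℝ y x + c ^ 2 * Nm x := by
  simp only [Nm, inner_add_left, inner_add_right, real_inner_smul_left,
    real_inner_smul_right, real_inner_comm y x]
  ring

/-- `1 - p` times the first left-hand side plus `p` times the second is the right-hand side. -/
lemma Nm_add_smul_le_or_Nm_add_smul_sub_le {p : ℝ} (hp₀ : 0 ≤ p) (hp₁ : p ≤ 1) (y x : E) :
    Nm (y + p • x) ≤ Nm y + p * (1 - p) * Nm x ∨
      Nm (y + p • x - x) ≤ Nm y + p * (1 - p) * Nm x := by
  have hsub : y + p • x - x = y + (p - 1) • x := by rw [sub_smul, one_smul, add_sub_assoc]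
  rw [hsub, Nm_add_smul, Nm_add_smul]
  by_contra! h
  nlinarith [mul_le_mul_of_nonneg_left h.1.le (sub_nonneg.2 hp₁),
    mul_le_mul_of_nonneg_left h.2.le hp₀]

/-- Derandomised averaging: choosing `S` one index at a time keeps the norm below its
expected value when each index enters `S` independently with probability `p`. -/
lemma exists_subset_Nm_add_sum_smul_sub_sum_le {ι : Type*} [DecidableEq ι] {p : ℝ}
    (hp₀ : 0 ≤ p) (hp₁ : p ≤ 1) (x : ι → E) (I : Finset ι) (y : E) :
    ∃ S ⊆ I, Nm (y + ∑ i ∈ I, p • x i - ∑ i ∈ S, x i) ≤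
      Nm y + p * (1 - p) * ∑ i ∈ I, Nm (x i) := by
  induction I using Finset.induction_on generalizing y with
  | empty => exact ⟨∅, subset_rfl, by simp⟩
  | insert k I hk ih =>
    rcases Nm_add_smul_le_or_Nm_add_smul_sub_le hp₀ hp₁ y (x k) with hy | hy
    · obtain ⟨S, hSI, hS⟩ := ih (y + p • x k)
      refine ⟨S, hSI.trans (Finset.subset_insert k I), ?_⟩
      rw [Finset.sum_insert hk, Finset.sum_insert hk, ← add_assoc]
      linarith
    · obtain ⟨S, hSI, hS⟩ := ih (y + p • x k - x k)
      refine ⟨insert k S, Finset.insert_subset_insert k hSI, ?_⟩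
      rw [Finset.sum_insert hk, Finset.sum_insert hk, Finset.sum_insert (fun h => hk (hSI h))]
      have : y + (p • x k + ∑ i ∈ I, p • x i) - (x k + ∑ i ∈ S, x i) =
          y + p • x k - x k + ∑ i ∈ I, p • x i - ∑ i ∈ S, x i := by abel
      rw [this]
      linarith

lemma exists_subset_Nm_smul_sum_sub_sum_le {ι : Type*} [Fintype ι] [DecidableEq ι] {p : ℝ}
    (hp₀ : 0 ≤ p) (hp₁ : p ≤ 1) (x : ι → E) (l : ι) :
    ∃ S ⊆ Finset.univ.erase l, Nm (p • ∑ i, x i - ∑ i ∈ S, x i) ≤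
      p ^ 2 * Nm (x l) + p * (1 - p) * ∑ i ∈ Finset.univ.erase l, Nm (x i) := by
  have hsum : p • ∑ i, x i = p • x l + ∑ i ∈ Finset.univ.erase l, p • x i := by
    rw [← Finset.add_sum_erase _ _ (Finset.mem_univ l), smul_add, Finset.smul_sum]
  have hl : Nm (p • x l) = p ^ 2 * Nm (x l) := by
    rw [Nm, Nm, real_inner_smul_left, real_inner_smul_right]
    ring
  simpa only [hsum, hl] using
    exists_subset_Nm_add_sum_smul_sub_sum_le hp₀ hp₁ x (Finset.univ.erase l) (p • x l)

lemma exists_subset_Nm_smul_sum_sub_sum_lt {ι : Type*} [Fintype ι] [DecidableEq ι] {p : ℝ}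
    (hp₀ : 0 ≤ p) (hp : p < 1 / 2) (x : ι → E) {l : ι} (hl : ∀ i, Nm (x i) ≤ Nm (x l))
    (hxl : x l ≠ 0) :
    ∃ S ⊆ Finset.univ.erase l, Nm (p • ∑ i, x i - ∑ i ∈ S, x i) <
      Fintype.card ι / 4 * Nm (x l) := by
  obtain ⟨S, hS, hNm⟩ := exists_subset_Nm_smul_sum_sub_sum_le hp₀ (by linarith) x l
  refine ⟨S, hS, hNm.trans_lt ?_⟩
  have : Nonempty ι := ⟨l⟩
  set N := Nm (x l)
  have hN : 0 < N := Nm_pos hxl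
  have hcard : (1 : ℝ) ≤ Fintype.card ι := by exact_mod_cast Fintype.card_pos
  have hsum : ∑ i ∈ Finset.univ.erase l, Nm (x i) ≤ (Fintype.card ι - 1) * N := by
    calc ∑ i ∈ Finset.univ.erase l, Nm (x i) ≤ (Finset.univ.erase l).card • N :=
          Finset.sum_le_card_nsmul _ _ _ fun i _ => hl i
      _ = (Fintype.card ι - 1) * N := by
          rw [Finset.card_erase_of_mem (Finset.mem_univ l), Finset.card_univ, nsmul_eq_mul,
            Nat.cast_sub Fintype.card_pos, Nat.cast_one]
  have hvar : p * (1 - p) ≤ 1 / 4 := by nlinarith [sq_nonneg (p - 1 / 2)]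
  have hsq : p ^ 2 < 1 / 4 := by nlinarith
  linarith [mul_le_mul_of_nonneg_left hsum (mul_nonneg hp₀ (by linarith : 0 ≤ 1 - p)),
    mul_le_mul_of_nonneg_right hvar (mul_nonneg (sub_nonneg.2 hcard) hN.le),
    mul_lt_mul_of_pos_right hsq hN]

lemma LinearIndependent.of_span_le_span {K V ι : Type*} [Field K] [AddCommGroup V] [Module K V]
    [Fintype ι] {x y : ι → V} (hx : LinearIndependent K x)
    (hxy : Submodule.span K (Set.range x) ≤ Submodule.span K (Set.range y)) :
    LinearIndependent K y := by
  have := FiniteDimensional.span_of_finite K (Set.finite_range y)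
  rw [linearIndependent_iff_card_eq_finrank_span] at hx ⊢
  exact le_antisymm (hx.trans_le (Submodule.finrank_mono hxy)) (finrank_range_le_card y)

/-- `e l = d • v - ∑_{i ≠ l} e i` stays in the span after the exchange. -/
lemma isZBasis_update_sub_sum {n d : ℕ} {e : Fin n → E} {v : E}
    (he : LinearIndependent ℝ e) (hdv : d • v = ∑ i, e i) (l : Fin n)
    {S : Finset (Fin n)} (hlS : l ∉ S) :
    IsZBasis (Submodule.span ℤ (Set.range e ∪ {v}))
      (Function.update e l (v - ∑ i ∈ S, e i)) := by
  set u := Function.update e l (v - ∑ i ∈ S, e i)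
  set M := Submodule.span ℤ (Set.range u)
  have hu : ∀ i, u i ∈ M := fun i => Submodule.subset_span ⟨i, rfl⟩
  have he_ne : ∀ i ≠ l, e i ∈ M := fun i hi => by
    simpa [u, Function.update_of_ne hi] using hu i
  have hv : v ∈ M := by
    have : v = u l + ∑ i ∈ S, e i := by simp [u]
    rw [this]
    exact M.add_mem (hu l) (M.sum_mem fun i hi => he_ne i (ne_of_mem_of_not_mem hi hlS))
  have he_mem : ∀ i, e i ∈ M := by
    intro i
    rcases eq_or_ne i l with rfl | hi
    · have : e i = d • v - ∑ j ∈ Finset.univ.erase i, e j := by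
        rw [hdv, ← Finset.add_sum_erase _ _ (Finset.mem_univ i), add_sub_cancel_right]
      rw [this]
      exact M.sub_mem (M.nsmul_mem hv d)
        (M.sum_mem fun j hj => he_ne j (Finset.ne_of_mem_erase hj))
    · exact he_ne i hi
  have hspan : M = Submodule.span ℤ (Set.range e ∪ {v}) := by
    apply le_antisymm
    · refine Submodule.span_le.2 (Set.range_subset_iff.2 fun i => ?_)
      rcases eq_or_ne i l with rfl | hi
      · simp only [u, Function.update_self]
        exact Submodule.sub_mem _ (Submodule.subset_span (Or.inr rfl))
          (Submodule.sum_mem _ fun j _ => Submodule.subset_span (Or.inl ⟨j, rfl⟩))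
      · simp only [u, Function.update_of_ne hi]
        exact Submodule.subset_span (Or.inl ⟨i, rfl⟩)
    · exact Submodule.span_le.2
        (Set.union_subset (Set.range_subset_iff.2 he_mem) (Set.singleton_subset_iff.2 hv))
  refine ⟨he.of_span_le_span (Submodule.span_le.2 (Set.range_subset_iff.2 fun i => ?_)), hspan⟩
  exact Submodule.span_subset_span ℤ ℝ _ (he_mem i)

section SuccessiveMinima

variable (Λ : Submodule ℤ E) {k : ℕ}

lemma succMin_bddBelow (hk : 0 < k) :
    BddBelow { r : ℝ | ∃ w : Fin k → E, (∀ j, w j ∈ Λ) ∧ LinearIndependent ℝ w ∧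
      ∀ j, Nm (w j) ≤ r } :=
  ⟨0, fun _ ⟨_, _, _, hw⟩ => (Nm_nonneg _).trans (hw ⟨0, hk⟩)⟩

lemma succMin_nonneg (hk : 0 < k) : 0 ≤ succMin Λ k :=
  Real.sInf_nonneg fun _ ⟨_, _, _, hw⟩ => (Nm_nonneg _).trans (hw ⟨0, hk⟩)

lemma succMin_le {r : ℝ} (hk : 0 < k) (w : Fin k → E) (hwΛ : ∀ j, w j ∈ Λ)
    (hw : LinearIndependent ℝ w) (hr : ∀ j, Nm (w j) ≤ r) : succMin Λ k ≤ r :=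
  csInf_le (succMin_bddBelow Λ hk) ⟨w, hwΛ, hw, hr⟩

/-- Sort `w` by norm: its first `i + 1` vectors witness `λ_{i+1} ≤ N(w_{σ i})`. -/
lemma prod_succMin_le_prod_Nm {n : ℕ} (w : Fin n → E) (hwΛ : ∀ i, w i ∈ Λ)
    (hw : LinearIndependent ℝ w) :
    ∏ i : Fin n, succMin Λ (i + 1) ≤ ∏ i, Nm (w i) := by
  set σ := Tuple.sort (fun i => Nm (w i))
  have hmono : Monotone ((fun i => Nm (w i)) ∘ σ) := Tuple.monotone_sort _
  rw [← Equiv.prod_comp σ fun i => Nm (w i)]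
  refine Finset.prod_le_prod (fun i _ => succMin_nonneg Λ (Nat.succ_pos i)) fun i _ => ?_
  refine succMin_le Λ (Nat.succ_pos i) (fun j => w (σ (Fin.castLE i.2 j))) (fun j => hwΛ _)
    (hw.comp _ (σ.injective.comp (Fin.castLE_injective _))) fun j => hmono ?_
  simpa [Fin.le_def] using Nat.lt_succ_iff.mp j.2

end SuccessiveMinima

lemma gramDet_nonneg {n : ℕ} (v : Fin n → E) : 0 ≤ gramDet v :=
  (Matrix.posSemidef_gram ℝ v).det_nonneg

section HermiteQuotient

variable {n : ℕ} {Λ : Submodule ℤ E}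

lemma latDet_nonneg : 0 ≤ latDet n Λ :=
  Real.sSup_nonneg fun _ ⟨v, _, hv⟩ => hv ▸ gramDet_nonneg v

lemma Hb_nonneg : 0 ≤ Hb n Λ :=
  Real.sInf_nonneg fun _ ⟨v, _, hv⟩ =>
    hv ▸ div_nonneg (Finset.prod_nonneg fun i _ => Nm_nonneg (v i)) latDet_nonneg

lemma Hb_le {b : Fin n → E} (hb : IsZBasis Λ b) : Hb n Λ ≤ (∏ i, Nm (b i)) / latDet n Λ :=
  csInf_le ⟨0, fun _ ⟨v, _, hv⟩ =>
    hv ▸ div_nonneg (Finset.prod_nonneg fun i _ => Nm_nonneg (v i)) latDet_nonneg⟩ ⟨b, hb, rfl⟩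

lemma prod_Nm_div_latDet_le_Mlat {e : Fin n → E} (he : IsSuccMinFrame Λ e) :
    (∏ i, Nm (e i)) / latDet n Λ ≤ Mlat n Λ := by
  obtain ⟨heΛ, he, hmin⟩ := he
  refine le_csInf ⟨_, e, heΛ, he, rfl⟩ fun _ ⟨w, hwΛ, hw, hq⟩ => hq ▸ ?_
  refine div_le_div_of_nonneg_right ?_ latDet_nonneg
  simpa only [hmin] using prod_succMin_le_prod_Nm Λ w hwΛ hw

/-- If `latDet` is the junk value `0` then `Hb = 0`, hence `Qb = 0`. -/
lemma Qb_lt_of_prod_Nm_lt {c : ℝ} (hc : 0 < c) {e b : Fin n → E} (he : IsSuccMinFrame Λ e)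
    (hb : IsZBasis Λ b) (hlt : ∏ i, Nm (b i) < c * ∏ i, Nm (e i)) : Qb n Λ < c := by
  rcases (latDet_nonneg (n := n) (Λ := Λ)).eq_or_lt with hD | hD
  · have : Hb n Λ = 0 := le_antisymm (by simpa [← hD] using Hb_le hb) Hb_nonneg
    simpa [Qb, this] using hc
  have hP : 0 < ∏ i, Nm (e i) := Finset.prod_pos fun i _ => Nm_pos (he.2.1.ne_zero i)
  have hM := prod_Nm_div_latDet_le_Mlat he
  rw [Qb, div_lt_iff₀ ((div_pos hP hD).trans_le hM)]
  calc Hb n Λ ≤ (∏ i, Nm (b i)) / latDet n Λ := Hb_le hb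
    _ < c * ((∏ i, Nm (e i)) / latDet n Λ) := by
      rw [← mul_div_assoc]; exact div_lt_div_of_pos_right hlt hD
    _ ≤ c * Mlat n Λ := mul_le_mul_of_nonneg_left hM hc.le

lemma prod_Nm_update_lt {n : ℕ} {x : Fin n → E} (hx : ∀ i, x i ≠ 0) {l : Fin n} {y : E}
    {c : ℝ} (hy : Nm y < c * Nm (x l)) :
    ∏ i, Nm (Function.update x l y i) < c * ∏ i, Nm (x i) := by
  have hrest : ∏ i ∈ Finset.univ.erase l, Nm (Function.update x l y i) =
      ∏ i ∈ Finset.univ.erase l, Nm (x i) :=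
    Finset.prod_congr rfl fun i hi => by rw [Function.update_of_ne (Finset.ne_of_mem_erase hi)]
  rw [← Finset.mul_prod_erase _ _ (Finset.mem_univ l), Function.update_self, hrest,
    ← Finset.mul_prod_erase _ _ (Finset.mem_univ l), ← mul_assoc]
  exact mul_lt_mul_of_pos_right hy (Finset.prod_pos fun i _ => Nm_pos (hx i))

end HermiteQuotient

theorem index_three_four_strict_bound_general (n d : ℕ)
    (hcase : (d = 3 ∧ 7 ≤ n ∧ n ≤ 10) ∨ (d = 4 ∧ 7 ≤ n ∧ n ≤ 13))
    (Λ : Submodule ℤ E)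
    (e : Fin n → E) (hframe : IsSuccMinFrame Λ e)
    (v : E) (hv : v = ((d : ℝ))⁻¹ • ∑ i, e i)
    (hgen : Λ = Submodule.span ℤ (Set.range e ∪ {v})) :
    Qb n Λ < (n : ℝ) / 4 := by
  have hd : 3 ≤ d := by omega
  have hn : 0 < n := by omega
  have he := hframe.2.1
  obtain ⟨l, -, hl⟩ := Finset.exists_max_image Finset.univ (fun i => Nm (e i))
    (Finset.univ_nonempty_iff.2 ⟨⟨0, hn⟩⟩)
  have hp : (d : ℝ)⁻¹ < 1 / 2 := by
    rw [one_div]; exact inv_strictAnti₀ two_pos (by exact_mod_cast (by omega : 2 < d))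
  obtain ⟨S, hS, hNm⟩ := exists_subset_Nm_smul_sum_sub_sum_lt (by positivity) hp e
    (fun i => hl i (Finset.mem_univ i)) (he.ne_zero l)
  rw [← hv, Fintype.card_fin] at hNm
  have hdv : d • v = ∑ i, e i := by
    rw [hv, ← Nat.cast_smul_eq_nsmul ℝ, smul_inv_smul₀ (by positivity)]
  have hbasis := isZBasis_update_sub_sum he hdv l fun hlS => (Finset.mem_erase.1 (hS hlS)).1 rfl
  rw [← hgen] at hbasis
  exact Qb_lt_of_prod_Nm_lt (by positivity) hframe hbasis (prod_Nm_update_lt he.ne_zero hNm)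

/-- let `(e₁,…,eₙ)` be a frame of successive minima for a lattice
`Λ` with `Λ = Λ' + ℤ·e`, `Λ'` the ℤ-span of the `eᵢ`, `e = (e₁+⋯+eₙ)/d`, where
`d = 3` and `7 ≤ n ≤ 10`, or `d = 4` and `7 ≤ n ≤ 13`. Then `Q_b(Λ) < n/4`. -/
theorem index_three_four_strict_bound (n d : ℕ)
    (hcase : (d = 3 ∧ 7 ≤ n ∧ n ≤ 10) ∨ (d = 4 ∧ 7 ≤ n ∧ n ≤ 13))
    (hE : Module.finrank ℝ E = n) (Λ : Submodule ℤ E) (hΛ : IsLattice n Λ)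
    (e : Fin n → E) (hframe : IsSuccMinFrame Λ e)
    (v : E) (hv : v = ((d : ℝ))⁻¹ • ∑ i, e i)
    (hgen : Λ = Submodule.span ℤ (Set.range e ∪ {v})) :
    Qb n Λ < (n : ℝ) / 4 :=
  index_three_four_strict_bound_general n d hcase Λ e hframe v hv hgen

end
end
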